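/- arXiv:0812.2718 — 4 statements merged into one kernel-verified Lean document; each statement's English description precedes it below -/
import Mathlib

section
/- (Stepin's theorem.) Let G be a countable group and H ≤ G a subgroup. Suppose H is Ornstein: for all countable sets K₁, K₂ with probability measures κ₁, κ₂ satisfying H(κ₁) = H(κ₂), the Bernoulli shifts (H, K₁^H, κ₁^H) and (H, K₂^H, κ₂^H) are measurably conjugate. Then G is Ornstein: for all countable sets L₁, L₂ with probability measures λ₁, λ₂ satisfying H(λ₁) = H(λ₂), the Bernoulli shifts (G, L₁^G, λ₁^G) and (G, L₂^G, λ₂^G) are measurably conjugate. -/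
open MeasureTheory ENNReal

/-- The Bernoulli shift action of a group `G` on `G → K`: `(g • x) f = x (g⁻¹ * f)`. -/
def bshift (G K : Type*) [Group G] (g : G) (x : G → K) : G → K :=
  fun f => x (g⁻¹ * f)

/-- `μ` is the product of the probability measures `κ i`: it is a probability measure
giving every measurable cylinder set the product of the measures of its sides.
(For probability measures this characterizes the product measure uniquely.) -/
def IsProductMeasure {ι : Type*} {K : ι → Type*} [∀ i, MeasurableSpace (K i)]
    (μ : Measure (∀ i, K i)) (κ : ∀ i, Measure (K i)) : Prop :=
  IsProbabilityMeasure μ ∧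
    ∀ (s : Finset ι) (A : ∀ i, Set (K i)), (∀ i ∈ s, MeasurableSet (A i)) →
      μ {x | ∀ i ∈ s, x i ∈ A i} = ∏ i ∈ s, κ i (A i)

/-- `φ` is a factor map, from the system given by the maps `T g` on `(X, μ)` to the system
given by the maps `S g` on `(Y, ν)`, relative to the invariant set `X'` of full measure. -/
def IsFactorMapOn {ι X Y : Type*} [MeasurableSpace X] [MeasurableSpace Y]
    (T : ι → X → X) (S : ι → Y → Y) (μ : Measure X) (ν : Measure Y)
    (φ : X → Y) (X' : Set X) : Prop :=
  Measurable φ ∧ (∀ g, Set.MapsTo (T g) X' X') ∧ μ X'ᶜ = 0 ∧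
    (∀ g, ∀ x ∈ X', φ (T g x) = S g (φ x)) ∧ Measure.map φ μ = ν

/-- `φ` is a factor map from the system `(T, μ)` to the system `(S, ν)`:  it is measurable,
pushes `μ` forward to `ν`, and is equivariant on some invariant set of full measure. -/
def IsFactorMap {ι X Y : Type*} [MeasurableSpace X] [MeasurableSpace Y]
    (T : ι → X → X) (S : ι → Y → Y) (μ : Measure X) (ν : Measure Y)
    (φ : X → Y) : Prop :=
  ∃ X' : Set X, IsFactorMapOn T S μ ν φ X'

/-- `φ` is a measure-conjugacy: a factor map which is injective on the invariant full-measure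
set, with a measurable inverse. -/
def IsMeasureConjugacy {ι X Y : Type*} [MeasurableSpace X] [MeasurableSpace Y]
    (T : ι → X → X) (S : ι → Y → Y) (μ : Measure X) (ν : Measure Y)
    (φ : X → Y) : Prop :=
  ∃ X' : Set X, IsFactorMapOn T S μ ν φ X' ∧ Set.InjOn φ X' ∧
    ∃ ψ : Y → X, Measurable ψ ∧ ∀ x ∈ X', ψ (φ x) = x

/-- The two systems are measurably conjugate: there are factor maps in both directions that
are inverse to each other almost everywhere. -/
def IsMeasConj {ι X Y : Type*} [MeasurableSpace X] [MeasurableSpace Y]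
    (T : ι → X → X) (S : ι → Y → Y) (μ : Measure X) (ν : Measure Y) : Prop :=
  ∃ (φ : X → Y) (ψ : Y → X), IsFactorMap T S μ ν φ ∧ IsFactorMap S T ν μ ψ ∧
    (∀ᵐ x ∂μ, ψ (φ x) = x) ∧ (∀ᵐ y ∂ν, φ (ψ y) = y)

/-- The entropy `H(κ) = -∑ₖ κ({k}) log κ({k}) ∈ [0,∞]` of a measure on a countable space. -/
noncomputable def measEntropy {K : Type*} [MeasurableSpace K] (κ : Measure K) : ℝ≥0∞ :=
  ∑' k : K, ENNReal.ofReal (Real.negMulLog (κ {k}).toReal)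

/-- A countable group `Γ` is *Ornstein* if any two Bernoulli shifts over `Γ` whose countable
base spaces have equal entropy are measurably conjugate. -/
def IsOrnstein (Γ : Type) [Group Γ] [Countable Γ] : Prop :=
  ∀ (K₁ K₂ : Type) (_ : MeasurableSpace K₁) (_ : MeasurableSpace K₂),
    MeasurableSingletonClass K₁ → MeasurableSingletonClass K₂ →
    Countable K₁ → Countable K₂ →
    ∀ (κ₁ : Measure K₁) (κ₂ : Measure K₂),
      IsProbabilityMeasure κ₁ → IsProbabilityMeasure κ₂ →
      measEntropy κ₁ = measEntropy κ₂ →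
      ∀ (μ₁ : Measure (Γ → K₁)) (μ₂ : Measure (Γ → K₂)),
        IsProductMeasure μ₁ (fun _ => κ₁) → IsProductMeasure μ₂ (fun _ => κ₂) →
        IsMeasConj (bshift Γ K₁) (bshift Γ K₂) μ₁ μ₂

/-!
Choosing a transversal of the left cosets of `H` identifies `G` with `(G ⧸ H) × H`, and hence
`K^G` with `(K^H)^(G ⧸ H)`, carrying `κ^G` to `(κ^H)^(G ⧸ H)`. In these coordinates `g ∈ G`
permutes the cosets and shifts each block by an element of `H` (a cocycle). So an
`H`-equivariant map `φ : K^H → K'^H`, applied block by block, is `G`-equivariant, and it pushes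
`κ^G` to `κ'^G` because the blocks are independent. Lifting a conjugacy and its a.e. inverse in
this way gives a conjugacy over `G`: only countably many blocks can go wrong, each on a null set.
-/

theorem isProductMeasure_iff_eq_infinitePi {ι : Type*} {K : ι → Type*}
    [∀ i, MeasurableSpace (K i)] {μ : Measure (∀ i, K i)} {κ : ∀ i, Measure (K i)}
    [∀ i, IsProbabilityMeasure (κ i)] :
    IsProductMeasure μ κ ↔ μ = Measure.infinitePi κ := by
  constructor
  · exact fun h => Measure.eq_infinitePi κ fun s t ht => h.2 s t fun i _ => ht i
  · rintro rfl
    exact ⟨inferInstance, fun s A hA => Measure.infinitePi_pi κ hA⟩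

namespace Subgroup

variable {G : Type*} [Group G] (H : Subgroup G)

noncomputable def transversalEquiv : G ≃ (G ⧸ H) × H where
  toFun g :=
    ((g : G ⧸ H), ⟨(g : G ⧸ H).out⁻¹ * g, QuotientGroup.leftRel_apply.mp (Quotient.mk_out _)⟩)
  invFun p := p.1.out * p.2
  left_inv g := by simp
  right_inv := by
    rintro ⟨c, h⟩
    ext <;> simp

@[simp] theorem transversalEquiv_symm_apply (p : (G ⧸ H) × H) :
    (transversalEquiv H).symm p = p.1.out * p.2 := rfl

noncomputable def piCosetEquiv (K : Type*) [MeasurableSpace K] :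
    (G → K) ≃ᵐ (G ⧸ H → H → K) :=
  (MeasurableEquiv.piCongrLeft (fun _ => K) (transversalEquiv H)).trans
    (MeasurableEquiv.curry _ _ K)

variable {H}
variable {K : Type*} [MeasurableSpace K]

@[simp] theorem piCosetEquiv_apply (x : G → K) (c : G ⧸ H) (h : H) :
    piCosetEquiv H K x c h = x (c.out * h) := by
  simp [piCosetEquiv, MeasurableEquiv.coe_piCongrLeft, Equiv.piCongrLeft_apply_eq_cast]

theorem map_piCosetEquiv_infinitePi (κ : Measure K) [IsProbabilityMeasure κ] :
    (Measure.infinitePi fun _ : G => κ).map (piCosetEquiv H K) =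
      Measure.infinitePi fun _ : G ⧸ H => Measure.infinitePi fun _ : H => κ := by
  rw [piCosetEquiv, MeasurableEquiv.coe_trans, ← Measure.map_map (by fun_prop) (by fun_prop),
    Measure.infinitePi_map_piCongrLeft (fun _ => κ), Measure.infinitePi_map_curry (fun _ _ => κ)]

theorem piCosetEquiv_bshift (g : G) (x : G → K) (c : G ⧸ H) :
    piCosetEquiv H K (bshift G K g x) c =
      bshift H K (transversalEquiv H (g⁻¹ * c.out)).2⁻¹
        (piCosetEquiv H K x (transversalEquiv H (g⁻¹ * c.out)).1) := by
  ext h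
  simp [bshift, transversalEquiv, mul_assoc]

variable (H) in
noncomputable def coindMap {K' : Type*} [MeasurableSpace K'] (φ : (H → K) → (H → K'))
    (x : G → K) : G → K' :=
  (piCosetEquiv H K').symm fun c => φ (piCosetEquiv H K x c)

variable {K' : Type*} [MeasurableSpace K'] {φ : (H → K) → (H → K')}

@[simp] theorem piCosetEquiv_coindMap (x : G → K) :
    piCosetEquiv H K' (coindMap H φ x) = fun c => φ (piCosetEquiv H K x c) :=
  MeasurableEquiv.apply_symm_apply _ _

theorem coindMap_coindMap {ψ : (H → K') → (H → K)} {x : G → K}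
    (hx : ∀ c, ψ (φ (piCosetEquiv H K x c)) = piCosetEquiv H K x c) :
    coindMap H ψ (coindMap H φ x) = x := by
  rw [coindMap, piCosetEquiv_coindMap, MeasurableEquiv.symm_apply_eq]
  exact funext hx

theorem measurable_coindMap (hφ : Measurable φ) : Measurable (coindMap H φ) :=
  (piCosetEquiv H K').symm.measurable.comp <|
    measurable_pi_lambda _ fun c =>
      hφ.comp ((measurable_pi_apply c).comp (piCosetEquiv H K).measurable)

theorem coindMap_bshift {Y : Set (H → K)}
    (hφ : ∀ h, ∀ z ∈ Y, φ (bshift H K h z) = bshift H K' h (φ z))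
    {x : G → K} (hx : ∀ c, piCosetEquiv H K x c ∈ Y) (g : G) :
    coindMap H φ (bshift G K g x) = bshift G K' g (coindMap H φ x) := by
  apply (piCosetEquiv H K').injective
  ext1 c
  simp only [piCosetEquiv_coindMap, piCosetEquiv_bshift, hφ _ _ (hx _)]

theorem map_coindMap_infinitePi {κ : Measure K} {κ' : Measure K'} [IsProbabilityMeasure κ]
    [IsProbabilityMeasure κ'] (hφ : Measurable φ)
    (hmap : (Measure.infinitePi fun _ : H => κ).map φ = Measure.infinitePi fun _ : H => κ') :
    (Measure.infinitePi fun _ : G => κ).map (coindMap H φ) =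
      Measure.infinitePi fun _ : G => κ' := by
  have hcomp : piCosetEquiv H K' ∘ coindMap H φ = (fun y c => φ (y c)) ∘ piCosetEquiv H K := by
    ext1 x
    exact piCosetEquiv_coindMap x
  rw [← (piCosetEquiv H K').map_measurableEquiv_injective.eq_iff,
    Measure.map_map (piCosetEquiv H K').measurable (measurable_coindMap hφ), hcomp,
    ← Measure.map_map (by fun_prop) (piCosetEquiv H K).measurable, map_piCosetEquiv_infinitePi,
    map_piCosetEquiv_infinitePi, Measure.infinitePi_map_pi _ fun _ => hφ, hmap]

theorem ae_forall_piCosetEquiv [Countable (G ⧸ H)] {κ : Measure K} [IsProbabilityMeasure κ]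
    {P : (H → K) → Prop} (hP : ∀ᵐ z ∂(Measure.infinitePi fun _ : H => κ), P z) :
    ∀ᵐ x ∂(Measure.infinitePi fun _ : G => κ), ∀ c, P (piCosetEquiv H K x c) := by
  have hΘ : MeasurePreserving (piCosetEquiv H K) _ _ :=
    ⟨(piCosetEquiv H K).measurable, map_piCosetEquiv_infinitePi κ⟩
  refine hΘ.quasiMeasurePreserving.ae (p := fun y => ∀ c, P (y c)) ?_
  exact ae_all_iff.mpr fun c => (measurePreserving_eval_infinitePi _ c).quasiMeasurePreserving.ae hP

section Conjugacy

variable [Countable (G ⧸ H)] {κ : Measure K} {κ' : Measure K'}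
  [IsProbabilityMeasure κ] [IsProbabilityMeasure κ']

theorem isFactorMapOn_coindMap {Y : Set (H → K)}
    (hφ : IsFactorMapOn (bshift H K) (bshift H K') (Measure.infinitePi fun _ => κ)
      (Measure.infinitePi fun _ => κ') φ Y) :
    IsFactorMapOn (bshift G K) (bshift G K') (Measure.infinitePi fun _ => κ)
      (Measure.infinitePi fun _ => κ') (coindMap H φ) {x | ∀ c, piCosetEquiv H K x c ∈ Y} := by
  obtain ⟨hmeas, hinv, hnull, hequiv, hmap⟩ := hφ
  refine ⟨measurable_coindMap hmeas, fun g x hx c => ?_, ?_,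
    fun g x hx => coindMap_bshift hequiv hx g, map_coindMap_infinitePi hmeas hmap⟩
  · rw [piCosetEquiv_bshift]
    exact hinv _ (hx _)
  · exact ae_iff.mp (ae_forall_piCosetEquiv (ae_iff.mpr hnull))

theorem isMeasConj_infinitePi_of_subgroup
    (h : IsMeasConj (bshift H K) (bshift H K') (Measure.infinitePi fun _ => κ)
      (Measure.infinitePi fun _ => κ')) :
    IsMeasConj (bshift G K) (bshift G K') (Measure.infinitePi fun _ => κ)
      (Measure.infinitePi fun _ => κ') := by
  obtain ⟨φ, ψ, ⟨_, hφ⟩, ⟨_, hψ⟩, hψφ, hφψ⟩ := h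
  exact ⟨coindMap H φ, coindMap H ψ,
    ⟨_, isFactorMapOn_coindMap hφ⟩, ⟨_, isFactorMapOn_coindMap hψ⟩,
    (ae_forall_piCosetEquiv hψφ).mono fun _ => coindMap_coindMap,
    (ae_forall_piCosetEquiv hφψ).mono fun _ => coindMap_coindMap⟩

end Conjugacy

end Subgroup

/-- **Stepin's theorem.** A countable group containing an Ornstein subgroup is Ornstein. -/
theorem isOrnstein_of_subgroup_isOrnstein
    (G : Type) [Group G] [Countable G] (H : Subgroup G)
    (hH : IsOrnstein H) : IsOrnstein G := by
  intro K₁ K₂ _ _ hs₁ hs₂ hc₁ hc₂ κ₁ κ₂ hκ₁ hκ₂ hent μ₁ μ₂ hμ₁ hμ₂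
  rw [isProductMeasure_iff_eq_infinitePi] at hμ₁ hμ₂
  subst hμ₁ hμ₂
  have : Countable (G ⧸ H) := Quotient.countable
  exact Subgroup.isMeasConj_infinitePi_of_subgroup <|
    hH K₁ K₂ _ _ hs₁ hs₂ hc₁ hc₂ κ₁ κ₂ hκ₁ hκ₂ hent _ _
      (isProductMeasure_iff_eq_infinitePi.mpr rfl) (isProductMeasure_iff_eq_infinitePi.mpr rfl)
end

section
/- Let G be a countable group, H ≤ G a subgroup, σ: G/H → G a section with σ(H) = e, and α(g,c) = σ(c)⁻¹ g σ(g⁻¹c) the associated cocycle. Let (K,κ) be a probability space. Then the map J: K^G → (K^H)^{G/H} defined by J(x)(c)(h) = x(σ(c)h) for x ∈ K^G, c ∈ G/H, h ∈ H, is a measure-conjugacy from the Bernoulli shift (G, K^G, κ^G) to the G-system on ((K^H)^{G/H}, (κ^H)^{G/H}) coinduced from the Bernoulli shift (H, K^H, κ^H). In particular: (i) J(g·x) = g·J(x) for all g ∈ G and x ∈ K^G; (ii) the pushforward of κ^G under J is (κ^H)^{G/H}; (iii) J is a bijection with inverse J⁻¹(y)(g) = y(gH)(α(g,gH)) for y ∈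 (K^H)^{G/H} and g ∈ G. -/
open MeasureTheory ENNReal

/-!
A section `σ` identifies `G` with `G ⧸ H × H` through `(c, h) ↦ σ c * h`, so `J` is a
reindexing of coordinates followed by currying, and both operations preserve infinite product
measures. Equivariance is the identity `g⁻¹ * (σ c * h) = σ (g⁻¹ • c) * (α(g, c)⁻¹ * h)`, and
`σ H = 1` gives `α(g, gH) = σ(gH)⁻¹ * g`, so that the stated `J⁻¹` is the inverse of this
reindexing.
-/

theorem IsProductMeasure.eq_infinitePi {ι : Type*} {K : ι → Type*} [∀ i, MeasurableSpace (K i)]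
    {μ : Measure (∀ i, K i)} {κ : ∀ i, Measure (K i)} [∀ i, IsProbabilityMeasure (κ i)]
    (hμ : IsProductMeasure μ κ) : μ = Measure.infinitePi κ :=
  Measure.eq_infinitePi κ fun s t ht => hμ.2 s t fun i _ => ht i

theorem MeasureTheory.Measure.infinitePi_map_piCongrLeft_symm_curry {ι ι' ι'' K : Type*}
    [MeasurableSpace K] (κ : Measure K) [IsProbabilityMeasure κ] (e : ι × ι' ≃ ι'') :
    (Measure.infinitePi fun _ : ι'' => κ).map
        ((MeasurableEquiv.piCongrLeft (fun _ => K) e).symm.trans (MeasurableEquiv.curry ι ι' K)) =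
      Measure.infinitePi fun _ : ι => Measure.infinitePi fun _ : ι' => κ := by
  rw [MeasurableEquiv.coe_trans, ← Measure.map_map (by fun_prop) (by fun_prop),
    ← Measure.infinitePi_map_piCongrLeft (fun _ => κ) e, MeasurableEquiv.map_symm_map]
  exact Measure.infinitePi_map_curry fun _ _ => κ

namespace QuotientGroup

variable {G : Type*} [Group G] {H : Subgroup G} {σ : G ⧸ H → G}

theorem inv_section_mul_mem (hσ : ∀ c : G ⧸ H, (σ c : G ⧸ H) = c) (g : G) :
    (σ g)⁻¹ * g ∈ H :=
  QuotientGroup.eq.mp (hσ g)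

theorem mk_section_mul (hσ : ∀ c : G ⧸ H, (σ c : G ⧸ H) = c) (c : G ⧸ H) (h : H) :
    ((σ c * h : G) : G ⧸ H) = c := by
  rw [mk_mul_of_mem _ h.2, hσ]

def prodEquivOfSection (hσ : ∀ c : G ⧸ H, (σ c : G ⧸ H) = c) : (G ⧸ H) × H ≃ G where
  toFun p := σ p.1 * p.2
  invFun g := (g, ⟨(σ g)⁻¹ * g, inv_section_mul_mem hσ g⟩)
  left_inv := fun ⟨c, h⟩ => by
    ext <;> simp [mk_section_mul hσ]
  right_inv g := mul_inv_cancel_left _ _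

theorem section_inv_mul_mul_section_mem (hσ : ∀ c : G ⧸ H, (σ c : G ⧸ H) = c) (g : G)
    (c : G ⧸ H) : (σ c)⁻¹ * g * σ (g⁻¹ • c) ∈ H := by
  rw [mul_assoc, ← QuotientGroup.eq, hσ, ← smul_eq_mul, ← MulAction.Quotient.smul_mk, hσ,
    smul_inv_smul]

def cocycle (hσ : ∀ c : G ⧸ H, (σ c : G ⧸ H) = c) (g : G) (c : G ⧸ H) : H :=
  ⟨(σ c)⁻¹ * g * σ (g⁻¹ • c), section_inv_mul_mul_section_mem hσ g c⟩

theorem cocycle_mk_self (hσ : ∀ c : G ⧸ H, (σ c : G ⧸ H) = c) (hσe : σ (1 : G) = 1) (g : G) :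
    (cocycle hσ g g : G) = (σ g)⁻¹ * g := by
  change (σ g)⁻¹ * g * σ (g⁻¹ • (g : G ⧸ H)) = _
  rw [MulAction.Quotient.smul_mk, smul_eq_mul, inv_mul_cancel, hσe, mul_one]

variable (K : Type*) [MeasurableSpace K]

def coinducedAction (hσ : ∀ c : G ⧸ H, (σ c : G ⧸ H) = c) (g : G) (y : G ⧸ H → H → K) :
    G ⧸ H → H → K :=
  fun c => bshift H K (cocycle hσ g c) (y (g⁻¹ • c))

def coinductionEquiv (hσ : ∀ c : G ⧸ H, (σ c : G ⧸ H) = c) : (G → K) ≃ᵐ (G ⧸ H → H → K) :=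
  (MeasurableEquiv.piCongrLeft (fun _ => K) (prodEquivOfSection hσ)).symm.trans
    (MeasurableEquiv.curry _ _ K)

variable {K}

theorem coinductionEquiv_apply (hσ : ∀ c : G ⧸ H, (σ c : G ⧸ H) = c) (x : G → K) (c : G ⧸ H)
    (h : H) : coinductionEquiv K hσ x c h = x (σ c * h) :=
  rfl

theorem coinductionEquiv_symm_apply (hσ : ∀ c : G ⧸ H, (σ c : G ⧸ H) = c)
    (hσe : σ (1 : G) = 1) (y : G ⧸ H → H → K) (g : G) :
    (coinductionEquiv K hσ).symm y g = y g (cocycle hσ g g) := by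
  rw [show cocycle hσ g g = ⟨(σ g)⁻¹ * g, inv_section_mul_mem hσ g⟩ from
    Subtype.ext (cocycle_mk_self hσ hσe g)]
  simp [coinductionEquiv, prodEquivOfSection, MeasurableEquiv.coe_piCongrLeft,
    Equiv.piCongrLeft_apply_eq_cast]

theorem coinductionEquiv_bshift (hσ : ∀ c : G ⧸ H, (σ c : G ⧸ H) = c) (g : G) (x : G → K) :
    coinductionEquiv K hσ (bshift G K g x) =
      coinducedAction K hσ g (coinductionEquiv K hσ x) := by
  funext c h
  simp only [coinductionEquiv_apply, coinducedAction, bshift, cocycle]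
  congr 1
  push_cast
  group

end QuotientGroup

theorem bernoulli_conjugate_to_coinduced_general
    (G : Type) [Group G] (H : Subgroup G)
    (σ : G ⧸ H → G) (hσ : ∀ c : G ⧸ H, (QuotientGroup.mk (σ c) : G ⧸ H) = c)
    (hσe : σ (QuotientGroup.mk (1 : G)) = 1)
    (hα : ∀ (g : G) (c : G ⧸ H), (σ c)⁻¹ * g * σ (g⁻¹ • c) ∈ H)
    (K : Type) [MeasurableSpace K] (κ : Measure K) [IsProbabilityMeasure κ]
    (μG : Measure (G → K)) (hμG : IsProductMeasure μG (fun _ => κ))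
    (μH : Measure (H → K)) (hμH : IsProductMeasure μH (fun _ => κ))
    (μQ : Measure ((G ⧸ H) → H → K)) (hμQ : IsProductMeasure μQ (fun _ => μH)) :
    -- the G-action coinduced from the Bernoulli H-action on (K^H, κ^H):
    let S : G → ((G ⧸ H) → H → K) → (G ⧸ H) → H → K := fun g y c =>
      bshift H K (⟨(σ c)⁻¹ * g * σ (g⁻¹ • c), hα g c⟩ : H) (y (g⁻¹ • c));
    let J : (G → K) → (G ⧸ H) → H → K := fun x c h => x (σ c * (h : G));
    let Jinv : ((G ⧸ H) → H → K) → G → K := fun y g =>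
      y (QuotientGroup.mk g)
        ⟨(σ (QuotientGroup.mk g))⁻¹ * g * σ (g⁻¹ • (QuotientGroup.mk g : G ⧸ H)),
          hα g (QuotientGroup.mk g)⟩;
    Measurable J ∧
    -- (i) equivariance
    (∀ (g : G) (x : G → K), J (bshift G K g x) = S g (J x)) ∧
    -- (ii) J pushes κ^G forward to (κ^H)^{G/H}
    Measure.map J μG = μQ ∧
    -- (iii) J is a bijection with the stated measurable inverse
    Function.LeftInverse Jinv J ∧ Function.RightInverse Jinv J ∧ Measurable Jinv := by
  intro S J Jinv
  obtain rfl := hμH.eq_infinitePi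
  obtain rfl := hμG.eq_infinitePi
  obtain rfl := hμQ.eq_infinitePi
  let Φ := QuotientGroup.coinductionEquiv K hσ
  have hJinv : Jinv = Φ.symm :=
    funext₂ fun y g => (QuotientGroup.coinductionEquiv_symm_apply hσ hσe y g).symm
  rw [hJinv]
  exact ⟨Φ.measurable, QuotientGroup.coinductionEquiv_bshift hσ,
    Measure.infinitePi_map_piCongrLeft_symm_curry κ (QuotientGroup.prodEquivOfSection hσ),
    Φ.symm_apply_apply, Φ.apply_symm_apply, Φ.symm.measurable⟩

/-- The map `J(x)(c)(h) = x(σ(c)h)` is a measure-conjugacy from the Bernoulli shift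
`(G, K^G, κ^G)` to the `G`-system on `((K^H)^{G/H}, (κ^H)^{G/H})` coinduced from the
Bernoulli shift `(H, K^H, κ^H)`:  it is equivariant, pushes the product measure `κ^G`
forward to `(κ^H)^{G/H}`, and is a bijection with the explicit measurable inverse
`J⁻¹(y)(g) = y(gH)(α(g, gH))`. -/
theorem bernoulli_conjugate_to_coinduced
    (G : Type) [Group G] [Countable G] (H : Subgroup G)
    (σ : G ⧸ H → G) (hσ : ∀ c : G ⧸ H, (QuotientGroup.mk (σ c) : G ⧸ H) = c)
    (hσe : σ (QuotientGroup.mk (1 : G)) = 1)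
    (hα : ∀ (g : G) (c : G ⧸ H), (σ c)⁻¹ * g * σ (g⁻¹ • c) ∈ H)
    (K : Type) [MeasurableSpace K] (κ : Measure K) [IsProbabilityMeasure κ]
    (μG : Measure (G → K)) (hμG : IsProductMeasure μG (fun _ => κ))
    (μH : Measure (H → K)) (hμH : IsProductMeasure μH (fun _ => κ))
    (μQ : Measure ((G ⧸ H) → H → K)) (hμQ : IsProductMeasure μQ (fun _ => μH)) :
    -- the G-action coinduced from the Bernoulli H-action on (K^H, κ^H):
    let S : G → ((G ⧸ H) → H → K) → (G ⧸ H) → H → K := fun g y c =>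
      bshift H K (⟨(σ c)⁻¹ * g * σ (g⁻¹ • c), hα g c⟩ : H) (y (g⁻¹ • c));
    let J : (G → K) → (G ⧸ H) → H → K := fun x c h => x (σ c * (h : G));
    let Jinv : ((G ⧸ H) → H → K) → G → K := fun y g =>
      y (QuotientGroup.mk g)
        ⟨(σ (QuotientGroup.mk g))⁻¹ * g * σ (g⁻¹ • (QuotientGroup.mk g : G ⧸ H)),
          hα g (QuotientGroup.mk g)⟩;
    Measurable J ∧
    -- (i) equivariance
    (∀ (g : G) (x : G → K), J (bshift G K g x) = S g (J x)) ∧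
    -- (ii) J pushes κ^G forward to (κ^H)^{G/H}
    Measure.map J μG = μQ ∧
    -- (iii) J is a bijection with the stated measurable inverse
    Function.LeftInverse Jinv J ∧ Function.RightInverse Jinv J ∧ Measurable Jinv :=
  bernoulli_conjugate_to_coinduced_general G H σ hσ hσe hα K κ μG hμG μH hμH μQ hμQ
end

section
/- Let 𝔽 = ⟨a,b⟩ be the free group of rank 2. Let p ∈ (0, 1/2), let L = {0, 1, *} with the probability measure λ given by λ({0}) = λ({1}) = p and λ({*}) = 1 − 2p, where {0,1} is identified with ℤ/2ℤ, and let M be the disjoint union of ℤ/2ℤ × ℤ/2ℤ and {*} with the probability measure μ given by μ({z}) = p/2 for each z ∈ ℤ/2ℤ × ℤ/2ℤ and μ({*}) = 1 − 2p. Define φ: L^𝔽 → M^𝔽 as follows: for x ∈ L^𝔽 and g ∈ 𝔽, set φ(x)(g) = * if x(g) = *, and otherwise φ(x)(g) = (x(g) + x(ga^k), x(g) + x(gb^l)) ∈ ℤ/2ℤ × ℤ/2ℤ, where k, l > 0 are the smallest positive integers such that x(ga^k) ∈ ℤ/2ℤ and x(gb^l) ∈ ℤ/2ℤ. Then φ is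 defined on a set of full λ^𝔽-measure and is a factor map from the Bernoulli shift (𝔽, L^𝔽, λ^𝔽) onto the Bernoulli shift (𝔽, M^𝔽, μ^𝔽). -/
open MeasureTheory ENNReal

/-- The free group `𝔽 = ⟨a,b⟩` of rank 2. -/
abbrev F2 : Type := FreeGroup (Fin 2)

/-- The first free generator `a` of `𝔽`. -/
def fa : F2 := FreeGroup.of 0

/-- The second free generator `b` of `𝔽`. -/
def fb : F2 := FreeGroup.of 1

/-- The three-point space `L = {0, 1, *}`, with `{0,1}` identified with `ℤ/2ℤ` and
`* = none`, carrying the discrete σ-algebra. -/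
instance : MeasurableSpace (Option (ZMod 2)) := ⊤

/-- The five-point space `M = (ℤ/2ℤ × ℤ/2ℤ) ⊔ {*}`, with `* = none`, carrying the discrete
σ-algebra. -/
instance : MeasurableSpace (Option (ZMod 2 × ZMod 2)) := ⊤

/-!
The map `φ` keeps the pattern of `*`'s, and off a null set every ray `g aᵏ`, `g bᵏ` (`k > 0`)
meets a site carrying a bit, which makes `φ` defined and equivariant there. For the law of the
labels, fix `g₀` with `x g₀ ≠ *` and add to the bits of `x` the indicator of one side of the
edge from `g₀` to `g₀ a` in the Cayley tree of `𝔽`. This preserves `λ^𝔽`, since `λ` is symmetric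
on `{0, 1}`, and it changes `φ x` only at `g₀`, by `(1, 0)`: the `a`-segment from a bit-carrying
site `g` to the next one crosses that edge only when `g = g₀`. The same works with `b`. Hence,
given the pattern of `*`'s on a finite set, the labels at its remaining sites are independent and
uniform on `(ℤ/2ℤ)²`, and this is the statement `φ_* λ^𝔽 = μ^𝔽`.
-/

section ProductMeasure

variable {ι : Type*} {K : ι → Type*}

theorem isPiSystem_pi_singleton :
    IsPiSystem {S : Set (∀ i, K i) | ∃ (s : Finset ι) (c : ∀ i, K i),
      S = (s : Set ι).pi fun i => {c i}} := by
  classical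
  rintro _ ⟨s, c, rfl⟩ _ ⟨s', c', rfl⟩ ⟨x, hx, hx'⟩
  refine ⟨s ∪ s', x, ?_⟩
  simp only [Set.mem_pi, Set.mem_singleton_iff, Finset.mem_coe] at hx hx'
  ext y
  simp only [Set.mem_inter_iff, Set.mem_pi, Set.mem_singleton_iff, Finset.coe_union,
    Set.mem_union, Finset.mem_coe, or_imp, forall_and]
  constructor
  · rintro ⟨h, h'⟩
    exact ⟨fun i hi => (h i hi).trans (hx i hi).symm, fun i hi => (h' i hi).trans (hx' i hi).symm⟩
  · rintro ⟨h, h'⟩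
    exact ⟨fun i hi => (h i hi).trans (hx i hi), fun i hi => (h' i hi).trans (hx' i hi)⟩

variable [∀ i, MeasurableSpace (K i)]

theorem IsProductMeasure.measure_pi_singleton [∀ i, MeasurableSingletonClass (K i)]
    {μ : Measure (∀ i, K i)} {κ : ∀ i, Measure (K i)} (hμ : IsProductMeasure μ κ)
    (s : Finset ι) (c : ∀ i, K i) :
    μ ((s : Set ι).pi fun i => {c i}) = ∏ i ∈ s, κ i {c i} :=
  hμ.2 s _ fun i _ => measurableSet_singleton (c i)

theorem generateFrom_pi_singleton [∀ i, Countable (K i)] [∀ i, MeasurableSingletonClass (K i)] :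
    MeasurableSpace.generateFrom {S : Set (∀ i, K i) | ∃ (s : Finset ι) (c : ∀ i, K i),
      S = (s : Set ι).pi fun i => {c i}} = MeasurableSpace.pi := by
  refine le_antisymm (MeasurableSpace.generateFrom_le ?_) ?_
  · rintro _ ⟨s, c, rfl⟩
    exact MeasurableSet.pi (Finset.countable_toSet s) fun i _ => measurableSet_singleton (c i)
  · refine iSup_le fun i => MeasurableSpace.comap_le_iff_le_map.mpr ?_
    refine @measurable_to_countable' _ _ _ _ (MeasurableSpace.generateFrom _) _ fun a => ?_
    rcases isEmpty_or_nonempty {x : ∀ i, K i // x i = a} with h | ⟨x, hx⟩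
    · convert MeasurableSet.empty
      exact Set.eq_empty_of_forall_notMem fun x hx => h.false ⟨x, hx⟩
    · apply MeasurableSpace.measurableSet_generateFrom
      refine ⟨{i}, x, ?_⟩
      simp [Set.singleton_pi, hx]

theorem measure_ext_of_pi_singleton [∀ i, Countable (K i)] [∀ i, MeasurableSingletonClass (K i)]
    {μ ν : Measure (∀ i, K i)} [IsFiniteMeasure μ]
    (h : ∀ (s : Finset ι) (c : ∀ i, K i),
      μ ((s : Set ι).pi fun i => {c i}) = ν ((s : Set ι).pi fun i => {c i})) : μ = ν := by
  rcases isEmpty_or_nonempty (∀ i, K i) with hK | ⟨⟨c⟩⟩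
  · exact Subsingleton.elim μ ν
  refine ext_of_generate_finite _ generateFrom_pi_singleton.symm isPiSystem_pi_singleton
    (by rintro _ ⟨s, c, rfl⟩; exact h s c) ?_
  simpa using h ∅ c

end ProductMeasure

theorem IsProductMeasure.measure_forall_mem_eq_zero {ι K : Type*} [MeasurableSpace K]
    {μ : Measure (ι → K)} {κ : Measure K} (hμ : IsProductMeasure μ fun _ => κ)
    {B : Set K} (hB : MeasurableSet B) (hκB : κ B < 1) {w : ℕ → ι}
    (hw : Function.Injective w) : μ {x | ∀ n, x (w n) ∈ B} = 0 := by
  classical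
  have hle (n : ℕ) : μ {x | ∀ n, x (w n) ∈ B} ≤ κ B ^ n :=
    calc μ {x | ∀ n, x (w n) ∈ B}
        ≤ μ {x | ∀ i ∈ (Finset.range n).image w, x i ∈ B} :=
          measure_mono fun x hx i hi => by
            obtain ⟨m, -, rfl⟩ := Finset.mem_image.mp hi
            exact hx m
      _ = κ B ^ n := by
          rw [hμ.2 _ _ fun _ _ => hB, Finset.prod_const, Finset.card_image_of_injective _ hw,
            Finset.card_range]
  exact le_antisymm (ge_of_tendsto' (ENNReal.tendsto_pow_atTop_nhds_zero_of_lt_one hκB) hle)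
    bot_le

theorem measurableSet_setOf_apply_eq {ι K : Type*} [MeasurableSpace K]
    [MeasurableSingletonClass K] (w : ι) (a : K) : MeasurableSet {x : ι → K | x w = a} :=
  (measurableSet_singleton a).preimage (measurable_pi_apply w)

namespace FreeGroup

variable {α : Type*} [DecidableEq α]

def endsWith (i : α) : Set (FreeGroup α) := {v | v.toWord.getLast? = some (i, true)}

instance (i : α) : DecidablePred (· ∈ endsWith i) := fun v =>
  inferInstanceAs (Decidable (v.toWord.getLast? = some (i, true)))

theorem of_pow_injective (i : α) : Function.Injective fun n : ℕ => of i ^ n := fun m n h => by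
  simpa using congrArg (List.length ∘ toWord) h

theorem of_mem_endsWith_iff {i j : α} : of j ∈ endsWith i ↔ j = i := by
  simp [endsWith]

theorem inv_of_mul_mem_endsWith {i j : α} {v : FreeGroup α} :
    (of j)⁻¹ * v ∈ endsWith i ↔ v ∈ endsWith i ∧ v ≠ of j := by
  have hword : ((of j)⁻¹ * v).toWord = reduce ((j, false) :: v.toWord) := by
    rw [toWord_mul, toWord_inv, toWord_of]
    rfl
  simp only [endsWith, Set.mem_ofPred_eq, hword, ← toWord_injective.ne_iff, toWord_of]
  rw [reduce.cons, reduce_toWord]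
  rcases v.toWord with _ | ⟨⟨k, b⟩, _ | ⟨y, t⟩⟩
  · simp
  · by_cases hk : j = k <;> cases b <;> simp [hk]; grind
  · dsimp only
    split_ifs <;> simp [List.getLast?_cons_cons]

/-- The indicator of the side of `g₀` of the edge from `g₀` to `g₀ * of i` in the Cayley tree:
`w` lies on that side iff the geodesic from `w` to `g₀ * of i` ends with this edge. -/
def edgeCut (i : α) (g₀ w : FreeGroup α) : ZMod 2 :=
  if w⁻¹ * (g₀ * of i) ∈ endsWith i then 1 else 0

theorem edgeCut_mul_of (i j : α) (g₀ w : FreeGroup α) :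
    edgeCut i g₀ (w * of j) = edgeCut i g₀ w + if j = i ∧ w = g₀ then 1 else 0 := by
  have hv : (w * of j)⁻¹ * (g₀ * of i) = (of j)⁻¹ * (w⁻¹ * (g₀ * of i)) := by group
  have hiff : j = i ∧ w = g₀ ↔ w⁻¹ * (g₀ * of i) = of j ∧ j = i := by
    constructor
    · rintro ⟨rfl, rfl⟩
      exact ⟨by group, rfl⟩
    · rintro ⟨h, rfl⟩
      exact ⟨rfl, mul_right_cancel (eq_inv_mul_iff_mul_eq.mp h.symm)⟩
  unfold edgeCut
  simp only [hv, inv_of_mul_mem_endsWith]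
  by_cases h : w⁻¹ * (g₀ * of i) = of j
  · simp only [h, of_mem_endsWith_iff, ne_eq, not_true_eq_false, and_false, if_false, hiff,
      true_and]
    split_ifs <;> decide
  · have hn : ¬(j = i ∧ w = g₀) := fun h' => h (hiff.mp h').1
    simp only [ne_eq, h, hn, not_false_eq_true, and_true, if_false, add_zero]

theorem edgeCut_mul_of_pow (i j : α) (g₀ w : FreeGroup α) (k : ℕ) :
    edgeCut i g₀ (w * of j ^ k) =
      edgeCut i g₀ w + ∑ m ∈ Finset.range k, if j = i ∧ w * of j ^ m = g₀ then 1 else 0 := by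
  induction k with
  | zero => simp
  | succ k ih => rw [pow_succ, ← mul_assoc, edgeCut_mul_of, ih, Finset.sum_range_succ, add_assoc]

theorem edgeCut_mul_of_pow_of_ne {i j : α} (hji : j ≠ i) (g₀ w : FreeGroup α) (k : ℕ) :
    edgeCut i g₀ (w * of j ^ k) = edgeCut i g₀ w := by
  simp [edgeCut_mul_of_pow, hji]

end FreeGroup

section HitTime

variable {G α : Type*} [Group G]

def HitsAlong (x : G → Option α) (g s : G) : Prop := ∃ k, 0 < k ∧ x (g * s ^ k) ≠ none

/-- The least `k > 0` with `x (g * s ^ k) ≠ none`, and `0` if there is none. -/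
noncomputable def hitTime (x : G → Option α) (g s : G) : ℕ :=
  open Classical in if h : HitsAlong x g s then Nat.find h else 0

variable {x : G → Option α} {g s : G}

theorem hitTime_pos (h : HitsAlong x g s) : 0 < hitTime x g s := by
  classical
  rw [hitTime, dif_pos h]
  exact (Nat.find_spec h).1

theorem apply_hitTime_ne_none (h : HitsAlong x g s) : x (g * s ^ hitTime x g s) ≠ none := by
  classical
  rw [hitTime, dif_pos h]
  exact (Nat.find_spec h).2

theorem apply_eq_none_of_lt_hitTime (h : HitsAlong x g s) {j : ℕ} (hj0 : 0 < j)
    (hj : j < hitTime x g s) : x (g * s ^ j) = none := by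
  classical
  rw [hitTime, dif_pos h] at hj
  simpa [hj0] using Nat.find_min h hj

theorem hitsAlong_congr {β : Type*} {x' : G → Option β} {g' : G}
    (h : ∀ k, x (g * s ^ k) = none ↔ x' (g' * s ^ k) = none) :
    HitsAlong x g s ↔ HitsAlong x' g' s := by
  simp only [HitsAlong, ne_eq, h]

theorem hitTime_congr {β : Type*} {x' : G → Option β} {g' : G}
    (h : ∀ k, x (g * s ^ k) = none ↔ x' (g' * s ^ k) = none) :
    hitTime x g s = hitTime x' g' s := by
  classical
  unfold hitTime
  by_cases hx : HitsAlong x g s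
  · rw [dif_pos hx, dif_pos ((hitsAlong_congr h).mp hx)]
    exact Nat.find_congr' (by simp [h])
  · rw [dif_neg hx, dif_neg (mt (hitsAlong_congr h).mpr hx)]

variable [MeasurableSpace (Option α)] [MeasurableSingletonClass (Option α)]

theorem measurable_hitTime (g s : G) : Measurable fun x : G → Option α => hitTime x g s := by
  classical
  have hS : MeasurableSet {x : G → Option α | HitsAlong x g s} := by
    simp only [HitsAlong, Set.ofPred_exists]
    exact .iUnion fun k => .inter (.const _) (measurableSet_setOf_apply_eq _ none).compl
  refine Measurable.dite (s := {x | HitsAlong x g s}) (f := fun x => Nat.find x.2)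
    (measurable_find _ fun k => ?_) measurable_const hS
  exact (MeasurableSet.inter (.const (0 < k)) (measurableSet_setOf_apply_eq _ none).compl).preimage
    measurable_subtype_coe

theorem measurable_apply_hitTime (g s : G) :
    Measurable fun x : G → Option α => x (g * s ^ hitTime x g s) :=
  (measurable_from_prod_countable_left (f := fun p : (G → Option α) × ℕ => p.1 (g * s ^ p.2))
    fun n => by exact measurable_pi_apply (g * s ^ n)).comp
    (measurable_id.prodMk (measurable_hitTime g s))

end HitTime

theorem FreeGroup.edgeCut_add_edgeCut_hitTime {β γ : Type*} [DecidableEq β]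
    {x : FreeGroup β → Option γ} {g g₀ : FreeGroup β} {i : β} (hx : HitsAlong x g (of i))
    (hg₀ : x g₀ ≠ none) :
    edgeCut i g₀ g + edgeCut i g₀ (g * of i ^ hitTime x g (of i)) = if g = g₀ then 1 else 0 := by
  rw [edgeCut_mul_of_pow, ← add_assoc, CharTwo.add_self_eq_zero, zero_add, Finset.sum_eq_single 0]
  · simp
  · rintro m hm hm0
    rw [if_neg]
    rintro ⟨-, rfl⟩
    exact hg₀ (apply_eq_none_of_lt_hitTime hx (Nat.pos_of_ne_zero hm0) (Finset.mem_range.mp hm))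
  · exact fun h => absurd (Finset.mem_range.mpr (hitTime_pos hx)) h

namespace Weiss

open FreeGroup

abbrev L : Type := Option (ZMod 2)

abbrev M : Type := Option (ZMod 2 × ZMod 2)

def label : L → L → L → M
  | some i, some u, some v => some (i + u, i + v)
  | _, _, _ => none

noncomputable def weissMap (x : F2 → L) (g : F2) : M :=
  label (x g) (x (g * fa ^ hitTime x g fa)) (x (g * fb ^ hitTime x g fb))

def goodSet : Set (F2 → L) := {x | ∀ g, HitsAlong x g fa ∧ HitsAlong x g fb}

theorem measurable_weissMap : Measurable weissMap :=
  measurable_pi_lambda _ fun g =>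
    (Measurable.of_discrete (f := fun t : L × L × L => label t.1 t.2.1 t.2.2)).comp <|
      (measurable_pi_apply g).prodMk <|
        (measurable_apply_hitTime g fa).prodMk (measurable_apply_hitTime g fb)

theorem weissMap_eq_none {x : F2 → L} {g : F2} (h : x g = none) : weissMap x g = none := by
  simp [weissMap, h, label]

theorem weissMap_eq_some {x : F2 → L} {g : F2} {i u v : ZMod 2} (hi : x g = some i)
    (hu : x (g * fa ^ hitTime x g fa) = some u) (hv : x (g * fb ^ hitTime x g fb) = some v) :
    weissMap x g = some (i + u, i + v) := by
  simp [weissMap, hi, hu, hv, label]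

theorem weissMap_eq_none_iff {x : F2 → L} (hx : x ∈ goodSet) {g : F2} :
    weissMap x g = none ↔ x g = none := by
  refine ⟨fun h => ?_, weissMap_eq_none⟩
  obtain ⟨u, hu⟩ := Option.ne_none_iff_exists'.mp (apply_hitTime_ne_none (hx g).1)
  obtain ⟨v, hv⟩ := Option.ne_none_iff_exists'.mp (apply_hitTime_ne_none (hx g).2)
  by_contra hg
  obtain ⟨i, hi⟩ := Option.ne_none_iff_exists'.mp hg
  simp [weissMap_eq_some hi hu hv] at h

theorem bshift_apply_mul (h : F2) (x : F2 → L) (g w : F2) :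
    bshift F2 L h x (g * w) = x (h⁻¹ * g * w) := by
  simp [bshift, mul_assoc]

theorem weissMap_bshift (h : F2) (x : F2 → L) :
    weissMap (bshift F2 L h x) = bshift F2 M h (weissMap x) := by
  have hk (g s : F2) : hitTime (bshift F2 L h x) g s = hitTime x (h⁻¹ * g) s :=
    hitTime_congr fun k => by rw [bshift_apply_mul]
  funext g
  simp only [weissMap, hk, bshift_apply_mul]
  rfl

theorem bshift_mem_goodSet (h : F2) {x : F2 → L} (hx : x ∈ goodSet) :
    bshift F2 L h x ∈ goodSet := fun g => by
  simp only [HitsAlong, bshift_apply_mul]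
  exact hx (h⁻¹ * g)

theorem measure_goodSet_compl {lam : Measure L} (hlam : lam {none} < 1)
    {μL : Measure (F2 → L)} (hμL : IsProductMeasure μL fun _ => lam) : μL goodSetᶜ = 0 := by
  have hray (g : F2) (i : Fin 2) :
      μL {x | ∀ n, x (g * of i ^ (n + 1)) ∈ ({none} : Set L)} = 0 :=
    hμL.measure_forall_mem_eq_zero (w := fun n => g * of i ^ (n + 1))
      (measurableSet_singleton none) hlam fun m n h =>
        Nat.succ_injective (of_pow_injective i (mul_left_cancel h))
  refine measure_mono_null (fun x hx => ?_) (measure_iUnion_null fun g =>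
    measure_union_null (hray g 0) (hray g 1))
  simp only [goodSet, Set.mem_compl_iff, Set.mem_ofPred_eq, not_forall] at hx
  obtain ⟨g, hg⟩ := hx
  have hray_of {i : Fin 2} (h : ¬HitsAlong x g (of i)) :
      x ∈ {x : F2 → L | ∀ n, x (g * of i ^ (n + 1)) ∈ ({none} : Set L)} :=
    fun n => by_contra fun hn => h ⟨n + 1, n.succ_pos, hn⟩
  refine Set.mem_iUnion.mpr ⟨g, ?_⟩
  rcases not_and_or.mp hg with h | h
  exacts [Or.inl (hray_of h), Or.inr (hray_of h)]

def flipBy (y : F2 → ZMod 2) (x : F2 → L) : F2 → L := fun w => (x w).map (· + y w)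

theorem measurable_flipBy (y : F2 → ZMod 2) : Measurable (flipBy y) :=
  measurable_pi_lambda _ fun w => Measurable.of_discrete.comp (measurable_pi_apply w)

theorem map_flipBy {lam : Measure L} (hlam : ∀ i j : ZMod 2, lam {some i} = lam {some j})
    {μL : Measure (F2 → L)} (hμL : IsProductMeasure μL fun _ => lam) (y : F2 → ZMod 2) :
    μL.map (flipBy y) = μL := by
  have := hμL.1
  refine measure_ext_of_pi_singleton fun s c => ?_
  have hpre : flipBy y ⁻¹' ((s : Set F2).pi fun g => {c g}) =
      (s : Set F2).pi fun g => {flipBy y c g} := by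
    ext x
    simp only [Set.mem_preimage, Set.mem_pi, Set.mem_singleton_iff, flipBy]
    refine forall₂_congr fun g _ => ?_
    rcases x g with _ | i <;> rcases c g with _ | j <;> simp
    generalize y g = a
    revert i j a
    decide
  rw [Measure.map_apply (measurable_flipBy y) (.pi (Finset.countable_toSet s) fun _ _ =>
    measurableSet_singleton _), hpre, hμL.measure_pi_singleton, hμL.measure_pi_singleton]
  refine Finset.prod_congr rfl fun g _ => ?_
  simp only [flipBy]
  rcases c g with _ | i
  exacts [rfl, hlam _ _]

theorem weissMap_flipBy (y : F2 → ZMod 2) (x : F2 → L) (g : F2) :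
    weissMap (flipBy y x) g = (weissMap x g).map
      (· + (y g + y (g * fa ^ hitTime x g fa), y g + y (g * fb ^ hitTime x g fb))) := by
  have hk (s : F2) : hitTime (flipBy y x) g s = hitTime x g s :=
    hitTime_congr fun k => Option.map_eq_none_iff
  simp only [weissMap, hk, flipBy]
  rcases x g with _ | i <;> rcases x (g * fa ^ hitTime x g fa) with _ | u <;>
    rcases x (g * fb ^ hitTime x g fb) with _ | v <;>
    simp only [label, Option.map_some, Option.map_none, Option.some.injEq, Prod.mk_add_mk,
      Prod.mk.injEq]
  constructor <;> ring

def flipVector (g₀ : F2) (z : ZMod 2 × ZMod 2) (w : F2) : ZMod 2 :=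
  z.1 * edgeCut 0 g₀ w + z.2 * edgeCut 1 g₀ w

def shiftAt {ι : Type*} [DecidableEq ι] (g₀ : ι) (z : ZMod 2 × ZMod 2) (y : ι → M) : ι → M :=
  Function.update y g₀ ((y g₀).map (· + z))

theorem measurable_shiftAt {ι : Type*} [DecidableEq ι] (g₀ : ι) (z : ZMod 2 × ZMod 2) :
    Measurable (shiftAt g₀ z) := by
  unfold shiftAt
  fun_prop

theorem weissMap_flipBy_flipVector {x : F2 → L} (hx : x ∈ goodSet) {g₀ : F2} (hg₀ : x g₀ ≠ none)
    (z : ZMod 2 × ZMod 2) :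
    weissMap (flipBy (flipVector g₀ z) x) = shiftAt g₀ z (weissMap x) := by
  funext g
  have ha : edgeCut 0 g₀ g + edgeCut 0 g₀ (g * fa ^ hitTime x g fa) = if g = g₀ then 1 else 0 :=
    edgeCut_add_edgeCut_hitTime (hx g).1 hg₀
  have hb : edgeCut 1 g₀ g + edgeCut 1 g₀ (g * fb ^ hitTime x g fb) = if g = g₀ then 1 else 0 :=
    edgeCut_add_edgeCut_hitTime (hx g).2 hg₀
  have ha' : edgeCut 1 g₀ (g * fa ^ hitTime x g fa) = edgeCut 1 g₀ g :=
    edgeCut_mul_of_pow_of_ne (by decide) g₀ g _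
  have hb' : edgeCut 0 g₀ (g * fb ^ hitTime x g fb) = edgeCut 0 g₀ g :=
    edgeCut_mul_of_pow_of_ne (by decide) g₀ g _
  have hinc : (flipVector g₀ z g + flipVector g₀ z (g * fa ^ hitTime x g fa),
      flipVector g₀ z g + flipVector g₀ z (g * fb ^ hitTime x g fb)) =
      if g = g₀ then z else 0 := by
    have hsum (a a' b b' : ZMod 2) :
        z.1 * a + z.2 * b + (z.1 * a' + z.2 * b') = z.1 * (a + a') + z.2 * (b + b') := by ring
    simp only [flipVector, hsum, ha, hb, ha', hb', CharTwo.add_self_eq_zero]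
    split_ifs <;> simp
  rw [weissMap_flipBy, hinc]
  by_cases hg : g = g₀
  · subst hg
    simp [shiftAt]
  · simp [shiftAt, hg]

theorem map_weissMap_preimage_shiftAt {lam : Measure L}
    (hlam : ∀ i j : ZMod 2, lam {some i} = lam {some j}) {μL : Measure (F2 → L)}
    (hμL : IsProductMeasure μL fun _ => lam) (hgood : μL goodSetᶜ = 0) (g₀ : F2)
    (z : ZMod 2 × ZMod 2) {B : Set (F2 → M)} (hB : MeasurableSet B)
    (hB₀ : B ⊆ {y | y g₀ ≠ none}) :
    μL.map weissMap (shiftAt g₀ z ⁻¹' B) = μL.map weissMap B := by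
  rw [Measure.map_apply measurable_weissMap (measurable_shiftAt g₀ z hB),
    Measure.map_apply measurable_weissMap hB]
  calc μL (weissMap ⁻¹' (shiftAt g₀ z ⁻¹' B))
      = μL (flipBy (flipVector g₀ z) ⁻¹' (weissMap ⁻¹' B)) := by
        refine measure_congr (Filter.eventuallyEq_set.mpr ?_)
        filter_upwards [mem_ae_iff.mpr hgood] with x hx
        by_cases hx₀ : x g₀ = none
        · have h₁ : shiftAt g₀ z (weissMap x) ∉ B := fun h => hB₀ h (by
            simp [shiftAt, weissMap_eq_none hx₀])
          have h₂ : weissMap (flipBy (flipVector g₀ z) x) ∉ B := fun h => hB₀ h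
            (weissMap_eq_none (by simp [flipBy, hx₀]))
          simp only [Set.mem_preimage, h₁, h₂]
        · simp only [Set.mem_preimage, weissMap_flipBy_flipVector hx hx₀]
    _ = μL (weissMap ⁻¹' B) := by
        rw [← Measure.map_apply (measurable_flipBy _) (measurable_weissMap hB), map_flipBy hlam hμL]

section PatternCylinder

variable {ι : Type*} {s : Finset ι} {c : ι → M}

def patternCylinder (s u : Finset ι) (c : ι → M) : Set (ι → M) :=
  {y | ∀ g ∈ s, (y g = none ↔ c g = none) ∧ (g ∈ u → y g = c g)}

/-- The number of labels `a` with the same pattern as `o`, that is `a = none ↔ o = none`. -/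
def labelWeight : M → ℝ≥0∞
  | none => 1
  | some _ => 4

theorem measurableSet_patternCylinder {u : Finset ι} : MeasurableSet (patternCylinder s u c) := by
  have : patternCylinder s u c = ⋂ g ∈ s, (fun y : ι → M => y g) ⁻¹'
      {a | (a = none ↔ c g = none) ∧ (g ∈ u → a = c g)} := by
    ext y
    simp [patternCylinder]
  rw [this]
  exact Finset.measurableSet_biInter s fun g _ => measurable_pi_apply g .of_discrete

theorem patternCylinder_self : patternCylinder s s c = (s : Set ι).pi fun g => {c g} := by
  ext y
  simp only [patternCylinder, Set.mem_ofPred_eq, Set.mem_pi, Finset.mem_coe,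
    Set.mem_singleton_iff]
  exact forall₂_congr fun g hg => ⟨fun h => h.2 hg, fun h => ⟨by rw [h], fun _ => h⟩⟩

variable [DecidableEq ι] {u : Finset ι} {g₀ : ι}

theorem patternCylinder_insert_of_eq_none (hs : g₀ ∈ s) (hc : c g₀ = none) :
    patternCylinder s (insert g₀ u) c = patternCylinder s u c := by
  ext y
  simp only [patternCylinder, Set.mem_ofPred_eq, Finset.mem_insert]
  refine forall₂_congr fun g hg => and_congr_right fun hnone => ⟨fun h hu => h (Or.inr hu), ?_⟩
  rintro h (rfl | hu)
  · rw [hc]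
    exact hnone.mpr hc
  · exact h hu

theorem shiftAt_preimage_patternCylinder_inter (hs : g₀ ∈ s) (hu : g₀ ∉ u)
    {z₀ : ZMod 2 × ZMod 2} (hc : c g₀ = some z₀) (z : ZMod 2 × ZMod 2) :
    shiftAt g₀ (-z₀ + z) ⁻¹' (patternCylinder s u c ∩ {y | y g₀ = some z}) =
      patternCylinder s (insert g₀ u) c := by
  ext y
  simp only [Set.mem_preimage, Set.mem_inter_iff, patternCylinder, Set.mem_ofPred_eq, shiftAt,
    Function.update_self, Finset.mem_insert]
  constructor
  · rintro ⟨h, h₀⟩ g hg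
    by_cases hgg : g = g₀
    · subst hgg
      have hy : y g = some z₀ := by
        rcases hyg : y g with _ | a
        · simp [hyg] at h₀
        · simp only [hyg, Option.map_some, Option.some.injEq] at h₀
          rw [show a = z₀ by rw [← add_neg_cancel_right a (-z₀ + z), h₀]; abel]
      simp [hy, hc]
    · simpa [Function.update_of_ne hgg, hgg] using h g hg
  · intro h
    have hy₀ : y g₀ = some z₀ := ((h g₀ hs).2 (Or.inl rfl)).trans hc
    refine ⟨fun g hg => ?_, by simp [hy₀]⟩
    by_cases hgg : g = g₀
    · subst hgg
      simp [hy₀, hc, hu]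
    · simpa [Function.update_of_ne hgg, hgg] using h g hg

variable {ν : Measure (ι → M)}

theorem measure_patternCylinder_insert
    (hν : ∀ z (B : Set (ι → M)), MeasurableSet B → B ⊆ {y | y g₀ ≠ none} →
      ν (shiftAt g₀ z ⁻¹' B) = ν B)
    (hs : g₀ ∈ s) (hu : g₀ ∉ u) {z₀ : ZMod 2 × ZMod 2} (hc : c g₀ = some z₀) :
    ν (patternCylinder s (insert g₀ u) c) * 4 = ν (patternCylinder s u c) := by
  have hsplit : patternCylinder s u c = ⋃ z, patternCylinder s u c ∩ {y | y g₀ = some z} := by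
    rw [← Set.inter_iUnion, eq_comm, Set.inter_eq_left]
    intro y hy
    obtain ⟨z, hz⟩ := Option.ne_none_iff_exists'.mp (mt (hy g₀ hs).1.mp (by simp [hc]))
    exact Set.mem_iUnion.mpr ⟨z, hz⟩
  have hmeas (z) : MeasurableSet (patternCylinder s u c ∩ {y | y g₀ = some z}) :=
    measurableSet_patternCylinder.inter (measurableSet_setOf_apply_eq g₀ (some z))
  have hpiece (z) : ν (patternCylinder s u c ∩ {y | y g₀ = some z}) =
      ν (patternCylinder s (insert g₀ u) c) := by
    rw [← shiftAt_preimage_patternCylinder_inter hs hu hc z,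
      hν _ _ (hmeas z) fun y hy => by simp [show y g₀ = some z from hy.2]]
  rw [hsplit, measure_iUnion (fun z z' hne => Set.disjoint_left.mpr fun y hy hy' =>
      hne (Option.some_injective _ (hy.2.symm.trans hy'.2))) hmeas,
    tsum_fintype, Finset.sum_congr rfl fun z _ => hpiece z, Finset.sum_const, Finset.card_univ]
  simp [mul_comm]

theorem measure_patternCylinder_self
    (hν : ∀ g₀ ∈ s, ∀ z (B : Set (ι → M)), MeasurableSet B → B ⊆ {y | y g₀ ≠ none} →
      ν (shiftAt g₀ z ⁻¹' B) = ν B) :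
    ν (patternCylinder s s c) * ∏ g ∈ s, labelWeight (c g) = ν (patternCylinder s ∅ c) := by
  suffices ∀ u ⊆ s, ν (patternCylinder s u c) * ∏ g ∈ u, labelWeight (c g) =
      ν (patternCylinder s ∅ c) from this s subset_rfl
  intro u
  induction u using Finset.induction_on with
  | empty => simp
  | insert g₀ u hu ih =>
    intro hsub
    have hs : g₀ ∈ s := hsub (Finset.mem_insert_self g₀ u)
    rw [Finset.prod_insert hu, ← ih ((Finset.subset_insert g₀ u).trans hsub)]
    rcases hc : c g₀ with _ | z₀
    · rw [patternCylinder_insert_of_eq_none hs hc, labelWeight, one_mul]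
    · rw [← measure_patternCylinder_insert (hν g₀ hs) hs hu hc, labelWeight, mul_assoc]

end PatternCylinder

theorem measure_weissMap_preimage_patternCylinder_empty {lam : Measure L}
    {μL : Measure (F2 → L)} (hμL : IsProductMeasure μL fun _ => lam) (hgood : μL goodSetᶜ = 0)
    (s : Finset F2) (c : F2 → M) :
    μL (weissMap ⁻¹' patternCylinder s ∅ c) =
      ∏ g ∈ s, lam (if c g = none then {none} else {none}ᶜ) := by
  rw [← hμL.2 s _ fun g _ => by split_ifs <;> simp]
  refine measure_congr (Filter.eventuallyEq_set.mpr ?_)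
  filter_upwards [mem_ae_iff.mpr hgood] with x hx
  simp only [Set.mem_preimage, patternCylinder, Set.mem_ofPred_eq, Finset.notMem_empty,
    IsEmpty.forall_iff, and_true, weissMap_eq_none_iff hx]
  refine forall₂_congr fun g _ => ?_
  split_ifs with hc <;> simp [hc]

theorem measure_ite_none_eq_mul_labelWeight {p : ℝ} (hp : 0 < p) {lam : Measure L}
    (hlam : ∀ i : ZMod 2, lam {some i} = ENNReal.ofReal p)
    (hlamstar : lam {none} = ENNReal.ofReal (1 - 2 * p)) {mu : Measure M}
    (hmu : ∀ z : ZMod 2 × ZMod 2, mu {some z} = ENNReal.ofReal (p / 2))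
    (hmustar : mu {none} = ENNReal.ofReal (1 - 2 * p)) (o : M) :
    lam (if o = none then {none} else {none}ᶜ) = mu {o} * labelWeight o := by
  rcases o with _ | z
  · simp [hlamstar, hmustar, labelWeight]
  have hcompl : ({none}ᶜ : Set L) = {some 0} ∪ {some 1} := by
    ext o
    rcases o with _ | i
    · simp
    · simp only [Set.mem_compl_iff, Set.mem_singleton_iff, reduceCtorEq, not_false_eq_true,
        Set.mem_union, Option.some.injEq, true_iff]
      revert i
      decide
  rw [if_neg (Option.some_ne_none z), hcompl, measure_union (by simp) (measurableSet_singleton _),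
    hlam, hlam, hmu, labelWeight, ← ENNReal.ofReal_add hp.le hp.le, ← ENNReal.ofReal_ofNat 4,
    ← ENNReal.ofReal_mul (by positivity)]
  ring_nf

theorem map_weissMap {p : ℝ} (hp : 0 < p) {lam : Measure L}
    (hlam : ∀ i : ZMod 2, lam {some i} = ENNReal.ofReal p)
    (hlamstar : lam {none} = ENNReal.ofReal (1 - 2 * p)) {mu : Measure M}
    (hmu : ∀ z : ZMod 2 × ZMod 2, mu {some z} = ENNReal.ofReal (p / 2))
    (hmustar : mu {none} = ENNReal.ofReal (1 - 2 * p))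
    {μL : Measure (F2 → L)} (hμL : IsProductMeasure μL fun _ => lam)
    {μM : Measure (F2 → M)} (hμM : IsProductMeasure μM fun _ => mu) :
    μL.map weissMap = μM := by
  have := hμL.1
  have hgood : μL goodSetᶜ = 0 :=
    measure_goodSet_compl (hlamstar ▸ ENNReal.ofReal_lt_one.mpr (by linarith)) hμL
  refine measure_ext_of_pi_singleton fun s c => ?_
  rw [hμM.measure_pi_singleton, ← patternCylinder_self]
  have hweight : ∀ g ∈ s, labelWeight (c g) ≠ 0 ∧ labelWeight (c g) ≠ ⊤ := fun g _ => by
    rcases c g with _ | z <;> simp [labelWeight]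
  refine (ENNReal.mul_left_inj (Finset.prod_ne_zero_iff.mpr fun g hg => (hweight g hg).1)
    (ENNReal.prod_ne_top fun g hg => (hweight g hg).2)).mp ?_
  rw [measure_patternCylinder_self
    fun g₀ _ z B hB hB₀ => map_weissMap_preimage_shiftAt (by simp [hlam]) hμL hgood g₀ z hB hB₀,
    Measure.map_apply measurable_weissMap measurableSet_patternCylinder,
    measure_weissMap_preimage_patternCylinder_empty hμL hgood, ← Finset.prod_mul_distrib]
  exact Finset.prod_congr rfl fun g _ =>
    measure_ite_none_eq_mul_labelWeight hp hlam hlamstar hmu hmustar (c g)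

end Weiss

theorem weiss_factor_map_general
    (p : ℝ) (hp : 0 < p)
    (lam : Measure (Option (ZMod 2)))
    (hlam : ∀ i : ZMod 2, lam {some i} = ENNReal.ofReal p)
    (hlamstar : lam {none} = ENNReal.ofReal (1 - 2*p))
    (mu : Measure (Option (ZMod 2 × ZMod 2)))
    (hmu : ∀ z : ZMod 2 × ZMod 2, mu {some z} = ENNReal.ofReal (p/2))
    (hmustar : mu {none} = ENNReal.ofReal (1 - 2*p))
    (μL : Measure (F2 → Option (ZMod 2)))
    (hμL : IsProductMeasure μL (fun _ => lam))
    (μM : Measure (F2 → Option (ZMod 2 × ZMod 2)))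
    (hμM : IsProductMeasure μM (fun _ => mu)) :
    ∃ (φ : (F2 → Option (ZMod 2)) → F2 → Option (ZMod 2 × ZMod 2))
      (X' : Set (F2 → Option (ZMod 2))),
      IsFactorMapOn (bshift F2 (Option (ZMod 2))) (bshift F2 (Option (ZMod 2 × ZMod 2)))
        μL μM φ X' ∧
      ∀ x ∈ X', ∀ g : F2,
        (x g = none → φ x g = none) ∧
        (∀ i : ZMod 2, x g = some i →
          ∃ k l : ℕ, 0 < k ∧ 0 < l ∧
            (∀ j : ℕ, 0 < j → j < k → x (g * fa ^ j) = none) ∧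
            (∀ j : ℕ, 0 < j → j < l → x (g * fb ^ j) = none) ∧
            ∃ u v : ZMod 2, x (g * fa ^ k) = some u ∧ x (g * fb ^ l) = some v ∧
              φ x g = some (i + u, i + v)) := by
  have hgood : μL Weiss.goodSetᶜ = 0 :=
    Weiss.measure_goodSet_compl (hlamstar ▸ ENNReal.ofReal_lt_one.mpr (by linarith)) hμL
  refine ⟨Weiss.weissMap, Weiss.goodSet, ⟨Weiss.measurable_weissMap,
    fun h x hx => Weiss.bshift_mem_goodSet h hx, hgood, fun h x _ => Weiss.weissMap_bshift h x,
    Weiss.map_weissMap hp hlam hlamstar hmu hmustar hμL hμM⟩,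
    fun x hx g => ⟨Weiss.weissMap_eq_none, fun i hi => ?_⟩⟩
  obtain ⟨ha, hb⟩ := hx g
  obtain ⟨u, hu⟩ := Option.ne_none_iff_exists'.mp (apply_hitTime_ne_none ha)
  obtain ⟨v, hv⟩ := Option.ne_none_iff_exists'.mp (apply_hitTime_ne_none hb)
  exact ⟨_, _, hitTime_pos ha, hitTime_pos hb, fun j => apply_eq_none_of_lt_hitTime ha,
    fun j => apply_eq_none_of_lt_hitTime hb, u, v, hu, hv, Weiss.weissMap_eq_some hi hu hv⟩

/-- (Weiss's construction.) Let `λ({0}) = λ({1}) = p`, `λ({*}) = 1 - 2p` on `L = {0,1,*}`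
and `μ({z}) = p/2` for `z ∈ ℤ/2ℤ × ℤ/2ℤ`, `μ({*}) = 1 - 2p` on `M = (ℤ/2ℤ)² ⊔ {*}`.
Then the map `φ` given by `φ(x)(g) = *` if `x(g) = *` and otherwise
`φ(x)(g) = (x(g) + x(ga^k), x(g) + x(gb^l))`, with `k, l` the least positive integers such
that `x(ga^k), x(gb^l) ∈ ℤ/2ℤ`, is defined on a shift-invariant set of full `λ^𝔽`-measure
and is a factor map from `(𝔽, L^𝔽, λ^𝔽)` onto `(𝔽, M^𝔽, μ^𝔽)`. -/
theorem weiss_factor_map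
    (p : ℝ) (hp : 0 < p) (hp' : p < 1/2)
    (lam : Measure (Option (ZMod 2))) [IsProbabilityMeasure lam]
    (hlam : ∀ i : ZMod 2, lam {some i} = ENNReal.ofReal p)
    (hlamstar : lam {none} = ENNReal.ofReal (1 - 2*p))
    (mu : Measure (Option (ZMod 2 × ZMod 2))) [IsProbabilityMeasure mu]
    (hmu : ∀ z : ZMod 2 × ZMod 2, mu {some z} = ENNReal.ofReal (p/2))
    (hmustar : mu {none} = ENNReal.ofReal (1 - 2*p))
    (μL : Measure (F2 → Option (ZMod 2)))
    (hμL : IsProductMeasure μL (fun _ => lam))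
    (μM : Measure (F2 → Option (ZMod 2 × ZMod 2)))
    (hμM : IsProductMeasure μM (fun _ => mu)) :
    ∃ (φ : (F2 → Option (ZMod 2)) → F2 → Option (ZMod 2 × ZMod 2))
      (X' : Set (F2 → Option (ZMod 2))),
      IsFactorMapOn (bshift F2 (Option (ZMod 2))) (bshift F2 (Option (ZMod 2 × ZMod 2)))
        μL μM φ X' ∧
      ∀ x ∈ X', ∀ g : F2,
        (x g = none → φ x g = none) ∧
        (∀ i : ZMod 2, x g = some i →
          ∃ k l : ℕ, 0 < k ∧ 0 < l ∧
            (∀ j : ℕ, 0 < j → j < k → x (g * fa ^ j) = none) ∧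
            (∀ j : ℕ, 0 < j → j < l → x (g * fb ^ j) = none) ∧
            ∃ u v : ZMod 2, x (g * fa ^ k) = some u ∧ x (g * fb ^ l) = some v ∧
              φ x g = some (i + u, i + v)) :=
  weiss_factor_map_general p hp lam hlam hlamstar mu hmu hmustar μL hμL μM hμM
end

section
/- Define f: (0, 1/2) → ℝ by f(p) = −2p·log p − (1−2p)·log(1−2p). Suppose (q_n)_{n≥0} and (p_n)_{n≥1} are sequences of real numbers such that q₀ > 0 and, for every n ≥ 0: q_n < log 2, p_{n+1} ∈ (0, 1/2), f(p_{n+1}) = q_n, and q_{n+1} = q_n + 2·p_{n+1}·log 2. Then no such pair of infinite sequences exists; equivalently, for any sequences satisfying q₀ > 0, p_{n+1} ∈ (0,1/2), f(p_{n+1}) = q_n and q_{n+1} = q_n + 2 p_{n+1} log 2 whenever q_n < log 2, there exists n with q_n ≥ log 2. -/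
/-- The entropy `f(p) = -2p log p - (1-2p) log(1-2p)` of the probability vector
`(p, p, 1-2p)`, for `p ∈ (0, 1/2)`; `log` is the natural logarithm. -/
noncomputable def entropyF (p : ℝ) : ℝ :=
  -2 * p * Real.log p - (1 - 2 * p) * Real.log (1 - 2 * p)

/-!
Since `f(p) ≤ 6 √p`, a value `q ≥ q₀ > 0` can only be attained by `f` at some `p ≥ (q₀/6)²`.
The sequence `q` is increasing, so every step adds at least `2 (q₀/6)² log 2` to it, and it
cannot stay below `log 2` forever.
-/

open Real

lemma Real.negMulLog_le_two_mul_sqrt {x : ℝ} (hx : 0 ≤ x) : negMulLog x ≤ 2 * √x := by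
  have hsq : negMulLog x = 2 * √x * negMulLog √x := by
    simp only [negMulLog, log_sqrt hx]
    nth_rewrite 1 [← mul_self_sqrt hx]
    ring
  have hle : negMulLog √x ≤ 1 := (negMulLog_le_one_sub_self (sqrt_nonneg x)).trans (by simp)
  rw [hsq]
  nlinarith [sqrt_nonneg x]

lemma entropyF_eq_negMulLog (p : ℝ) :
    entropyF p = 2 * negMulLog p + negMulLog (1 - 2 * p) := by
  simp only [entropyF, negMulLog]
  ring

lemma entropyF_le_six_mul_sqrt {p : ℝ} (hp0 : 0 ≤ p) (hp1 : p ≤ 1 / 2) :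
    entropyF p ≤ 6 * √p := by
  have hfirst := negMulLog_le_two_mul_sqrt hp0
  have hsecond := negMulLog_le_one_sub_self (x := 1 - 2 * p) (by linarith)
  have hp_le_sqrt : p ≤ √p := (le_sqrt hp0 hp0).2 (by nlinarith)
  rw [entropyF_eq_negMulLog]
  linarith

lemma sq_div_six_le_of_le_entropyF {x p : ℝ} (hx : 0 ≤ x) (hp0 : 0 ≤ p) (hp1 : p ≤ 1 / 2)
    (hxp : x ≤ entropyF p) : (x / 6) ^ 2 ≤ p :=
  (le_sqrt (by positivity) hp0).1 (by linarith [entropyF_le_six_mul_sqrt hp0 hp1])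

lemma exists_le_of_add_le_succ {q : ℕ → ℝ} {δ : ℝ} (hδ : 0 < δ)
    (hq : ∀ n, q n + δ ≤ q (n + 1)) (B : ℝ) : ∃ n, B ≤ q n := by
  have hlinear : ∀ n : ℕ, q 0 + n * δ ≤ q n := by
    intro n
    induction n with
    | zero => simp
    | succ n ih => push_cast; linarith [hq n]
  obtain ⟨n, hn⟩ := exists_nat_ge ((B - q 0) / δ)
  refine ⟨n, le_trans ?_ (hlinear n)⟩
  linarith [(div_le_iff₀ hδ).1 hn]

/-- The recursion `q_{n+1} = q_n + 2 p_{n+1} log 2`, where `p_{n+1} ∈ (0, 1/2)` solves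
`f(p_{n+1}) = q_n`, must reach or exceed `log 2` in finitely many steps whenever `q₀ > 0`. -/
theorem recursion_reaches_log_two (q : ℕ → ℝ) (p : ℕ → ℝ) (hq0 : 0 < q 0)
    (h : ∀ n : ℕ, q n < Real.log 2 →
      0 < p (n + 1) ∧ p (n + 1) < 1 / 2 ∧ entropyF (p (n + 1)) = q n ∧
        q (n + 1) = q n + 2 * p (n + 1) * Real.log 2) :
    ∃ n : ℕ, Real.log 2 ≤ q n := by
  by_contra! hbelow
  have step := fun n ↦ h n (hbelow n)
  have hlog2 : 0 < log 2 := log_pos one_lt_two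
  have hmono : Monotone q := monotone_nat_of_le_succ fun n ↦ by
    obtain ⟨hp0, -, -, hrec⟩ := step n
    rw [hrec]
    nlinarith
  have hincr : ∀ n, q n + 2 * (q 0 / 6) ^ 2 * log 2 ≤ q (n + 1) := fun n ↦ by
    obtain ⟨hp0, hp1, hf, hrec⟩ := step n
    have hp : (q 0 / 6) ^ 2 ≤ p (n + 1) :=
      sq_div_six_le_of_le_entropyF hq0.le hp0.le hp1.le (hf ▸ hmono (Nat.zero_le n))
    rw [hrec]
    nlinarith
  obtain ⟨n, hn⟩ := exists_le_of_add_le_succ (by positivity) hincr (log 2)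
  exact (hbelow n).not_ge hn
end
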